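/- Let F be a field of characteristic 0, G a totally ordered abelian group, and F((G)) the Hahn series field. For x ∈ F((G_{>0})) (series with support in the strictly positive part of G), the sum exp(x) := Σ_{i≥0} x^i/i! is a well-defined element of F((G_{≥0})), and exp : (F((G_{>0})), +) → (F((G))^*, ·) is an injective group homomorphism. -/

import Mathlib

/-!
`exp x` is the formal power series `exp X ∈ F⟦X⟧` evaluated at `X := x` by
`PowerSeries.heval`, a ring homomorphism sending `X` to `x` when `x` has positive order
(summability of the evaluated series is Neumann's lemma). The product `exp x * exp y` is a sum
over `ℕ × ℕ`; regrouped along antidiagonals, its terms are the coefficients of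
`exp (x X) * exp (y X) = exp ((x + y) X)` in `F((G))⟦X⟧`, i.e. the terms of `exp (x + y)`.
Injectivity reduces to `exp z = 1 → z = 0`, which holds because `exp z - 1 = z * u`, where `u`
is the evaluation of a power series with constant coefficient `1`, hence `u ≠ 0`.
-/

open Finset PowerSeries HahnSeries.SummableFamily Nat

theorem finsum_sum_antidiagonal {A M : Type*} [AddMonoid A] [HasAntidiagonal A] [DecidableEq A]
    [AddCommMonoid M] (f : A × A → M) (hf : f.support.Finite) :
    ∑ᶠ n, ∑ p ∈ antidiagonal n, f p = ∑ᶠ p, f p := by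
  set S := hf.toFinset
  have hfiber (n : A) : ∑ p ∈ antidiagonal n, f p = ∑ p ∈ S with p.1 + p.2 = n, f p := by
    refine sum_subset_zero_on_sdiff (fun p hp => ?_) (fun p hp => ?_) (fun _ _ => rfl) |>.symm
    · simpa using (mem_filter.1 hp).2
    · simp only [S, mem_sdiff, HasAntidiagonal.mem_antidiagonal, mem_filter,
        Set.Finite.mem_toFinset, Function.mem_support] at hp
      tauto
  rw [finsum_congr hfiber, finsum_eq_sum_of_support_subset _
    (S.support_of_fiberwise_sum_subset_image f _), sum_fiberwise_of_maps_to
    (fun p hp => mem_image_of_mem _ hp), finsum_eq_sum f hf]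

namespace HahnSeries

theorem SummableFamily.hsum_eq_of_antidiagonal {Γ R A : Type*} [PartialOrder Γ]
    [AddCommMonoid R] [AddMonoid A] [HasAntidiagonal A]
    (s : SummableFamily Γ R (A × A)) (t : SummableFamily Γ R A)
    (h : ∀ n, t n = ∑ p ∈ antidiagonal n, s p) : t.hsum = s.hsum := by
  classical
  ext g
  simp only [coeff_hsum, h, coeff_sum]
  exact finsum_sum_antidiagonal _ (s.finite_co_support g)

section Order

variable {Γ R : Type*} [LinearOrder Γ] [Zero R] {x : HahnSeries Γ R}

theorem lt_orderTop_iff_forall_mem_support {a : Γ} :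
    a < x.orderTop ↔ ∀ g ∈ x.support, a < g := by
  refine ⟨fun ha g hg => WithTop.coe_lt_coe.1 (ha.trans_le (orderTop_le_of_coeff_ne_zero hg)),
    fun h => ?_⟩
  rcases eq_or_ne x 0 with rfl | hx
  · simp
  · rw [orderTop_of_ne_zero hx]
    exact WithTop.coe_lt_coe.2 (h _ (x.isWF_support.min_mem (support_nonempty_iff.2 hx)))

theorem le_of_le_orderTop_of_mem_support {a g : Γ} (ha : a ≤ x.orderTop) (hg : g ∈ x.support) :
    a ≤ g :=
  WithTop.coe_le_coe.1 (ha.trans (orderTop_le_of_coeff_ne_zero hg))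

end Order

variable {Γ R : Type*} [AddCommMonoid Γ] [LinearOrder Γ] [IsOrderedCancelAddMonoid Γ]

theorem zero_le_orderTop_heval [CommRing R] {x : HahnSeries Γ R} (hx : 0 < x.orderTop)
    (f : PowerSeries R) : 0 ≤ (heval x f).orderTop := by
  refine le_orderTop_iff_forall.2 fun g hg => ?_
  rw [coeff_heval]
  refine finsum_eq_zero_of_forall_eq_zero fun n => ?_
  simp only [coeff_apply, powerSeriesFamily_of_orderTop_pos hx, HahnSeries.coeff_smul]
  refine smul_eq_zero_of_right _ (coeff_eq_zero_of_lt_orderTop ?_)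
  calc (g : WithTop Γ) < 0 := hg
    _ ≤ n • x.orderTop := nsmul_nonneg hx.le n
    _ ≤ (x ^ n).orderTop := orderTop_nsmul_le_orderTop_pow

variable [CommRing R] [Algebra ℚ R]

noncomputable def hexp (x : HahnSeries Γ R) : HahnSeries Γ R :=
  heval x (exp R)

theorem coeff_hexp {x : HahnSeries Γ R} (hx : 0 < x.orderTop) (g : Γ) :
    (hexp x).coeff g = ∑ᶠ n, (n ! : ℚ)⁻¹ • (x ^ n).coeff g := by
  simp [hexp, powerSeriesFamily_of_orderTop_pos hx]

theorem isUnit_hexp (x : HahnSeries Γ R) : IsUnit (hexp x) :=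
  (isUnit_iff_constantCoeff.2 (by simp)).map (heval x)

theorem hexp_zero : hexp (0 : HahnSeries Γ R) = 1 := by
  simp [hexp, powerSeriesFamily_hsum_zero]

theorem powerSeriesFamily_exp {x : HahnSeries Γ R} (hx : 0 < x.orderTop) (n : ℕ) :
    powerSeriesFamily x (exp R) n = PowerSeries.coeff n (rescale x (exp (HahnSeries Γ R))) := by
  simp [powerSeriesFamily_of_orderTop_pos hx, coeff_rescale, Algebra.smul_def, mul_comm]

theorem hexp_add {x y : HahnSeries Γ R} (hx : 0 < x.orderTop) (hy : 0 < y.orderTop) :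
    hexp (x + y) = hexp x * hexp y := by
  have hxy : 0 < (x + y).orderTop := (lt_min hx hy).trans_le min_orderTop_le_orderTop_add
  rw [hexp, hexp, hexp, heval_apply, heval_apply, heval_apply, ← hsum_mul]
  refine hsum_eq_of_antidiagonal _ _ fun n => ?_
  rw [powerSeriesFamily_exp hxy, ← exp_mul_exp_eq_exp_add, PowerSeries.coeff_mul]
  simp only [mul_toFun, powerSeriesFamily_exp hx, powerSeriesFamily_exp hy]

theorem eq_zero_of_hexp_eq_one [IsDomain R] {x : HahnSeries Γ R} (hx : 0 < x.orderTop)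
    (h : hexp x = 1) : x = 0 := by
  obtain ⟨q, hq⟩ : X ∣ exp R - 1 := X_dvd_iff.2 (by simp)
  have hq0 : constantCoeff q = 1 := by
    simpa using (congrArg (PowerSeries.coeff 1) hq).symm
  have hxq : x * heval x q = 0 :=
    calc x * heval x q = heval x (X * q) := by rw [map_mul, heval_X x hx]
      _ = hexp x - 1 := by rw [← hq, map_sub, map_one, hexp]
      _ = 0 := by rw [h, sub_self]
  refine (mul_eq_zero.1 hxq).resolve_right fun h0 => ?_
  simpa [h0, hq0] using coeff_heval_zero x q

theorem hexp_injOn [IsDomain R] : Set.InjOn (hexp (Γ := Γ) (R := R)) {x | 0 < x.orderTop} := by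
  intro x hx y hy h
  have hxy : 0 < (x - y).orderTop := (lt_min hx hy).trans_le min_orderTop_le_orderTop_sub
  have h1 : hexp (x - y) = 1 := (isUnit_hexp y).mul_left_injective <| by
    simp only [← hexp_add hxy hy, sub_add_cancel, h, one_mul]
  exact sub_eq_zero.1 (eq_zero_of_hexp_eq_one hxy h1)

end HahnSeries

open HahnSeries

/-- For a field `F` of characteristic 0 and a totally ordered abelian group `G`, the sum
`exp(x) := Σ_{i≥0} x^i/i!` is a well-defined Hahn series (with coefficients given by the
finitely-supported sums `∑ᶠ i, coeff_g(x^i)/i!`) with support in `G_{≥0}`, for every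
`x ∈ F((G_{>0}))`, and `exp` is an injective group homomorphism
`(F((G_{>0})), +) → (F((G))^*, ·)`. -/
theorem hahn_series_exp (F : Type) [Field F] [CharZero F]
    (G : Type) [AddCommGroup G] [LinearOrder G] [IsOrderedAddMonoid G] :
    ∃ expH : HahnSeries G F → HahnSeries G F,
      (∀ x : HahnSeries G F, (∀ g ∈ x.support, 0 < g) →
        (∀ g : G, (expH x).coeff g = ∑ᶠ i : ℕ, (x ^ i).coeff g / (Nat.factorial i : F)) ∧
        (∀ g : G, {i : ℕ | (x ^ i).coeff g ≠ 0}.Finite) ∧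
        (∀ g ∈ (expH x).support, 0 ≤ g) ∧
        IsUnit (expH x)) ∧
      expH 0 = 1 ∧
      (∀ x y : HahnSeries G F, (∀ g ∈ x.support, 0 < g) → (∀ g ∈ y.support, 0 < g) →
        expH (x + y) = expH x * expH y) ∧
      (∀ x y : HahnSeries G F, (∀ g ∈ x.support, 0 < g) → (∀ g ∈ y.support, 0 < g) →
        expH x = expH y → x = y) := by
  simp only [← lt_orderTop_iff_forall_mem_support]
  refine ⟨hexp, fun x hx => ⟨fun g => ?_, pow_finite_co_support hx, fun g =>
    le_of_le_orderTop_of_mem_support (zero_le_orderTop_heval hx _), isUnit_hexp x⟩,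
    hexp_zero, fun x y => hexp_add, fun x y hx hy h => hexp_injOn hx hy h⟩
  simp [coeff_hexp hx, Rat.smul_def, div_eq_inv_mul]
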